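/- arXiv:2512.24919 — 3 statements merged into one kernel-verified Lean document; each statement's English description precedes it below -/
import Mathlib

section
/- Let G be a residually finite group that is word hyperbolic (Gromov hyperbolic). Then G has a finite-index subgroup that is torsion free. -/
/-- The word metric on a group `G` associated to a generating set `S`:
the distance from `g` to `h` is the least length of a word in `S ∪ S⁻¹`
representing `g⁻¹ * h` (as a real number). -/
noncomputable def wordDist {G : Type*} [Group G] (S : Set G) (g h : G) : ℝ :=
  sInf {r : ℝ | ∃ l : List G, (∀ x ∈ l, x ∈ S ∨ x⁻¹ ∈ S) ∧ l.prod = g⁻¹ * h ∧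
    r = l.length}

/-- A group is word hyperbolic if for some (equivalently, any) finite generating set
its word metric satisfies Gromov's four-point condition for some `δ ≥ 0`. -/
def IsWordHyperbolic (G : Type*) [Group G] : Prop :=
  ∃ (S : Finset G) (δ : ℝ), 0 ≤ δ ∧ Subgroup.closure (S : Set G) = ⊤ ∧
    ∀ x y z w : G,
      wordDist (S : Set G) x y + wordDist (S : Set G) z w ≤
        max (wordDist (S : Set G) x z + wordDist (S : Set G) y w)
            (wordDist (S : Set G) x w + wordDist (S : Set G) y z) + 2 * δ

/-- A group is residually finite if every nontrivial element survives in some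
finite quotient. -/
def ResiduallyFinite (G : Type*) [Group G] : Prop :=
  ∀ g : G, g ≠ 1 → ∃ H : Subgroup G, H.Normal ∧ H.FiniteIndex ∧ g ∉ H

/-! A torsion element `g` of a δ-hyperbolic group has a finite orbit `⟨g⟩`; a point `x` minimising
the radius `r(x) = max_{p ∈ ⟨g⟩} d(x, p)` of that orbit (a quasi-centre) is moved by `g` at most
`4δ + 1`. Indeed, let `z` be a midpoint of a geodesic from `x` to `g x` and `p` an orbit point with
`d(z, p) ≥ r(x)`; the four-point condition for `x, g x, z, p` gives
`d(x, g x) + r(x) ≤ d(x, g x) / 2 + 1 / 2 + r(x) + 2δ`. Hence `g` is conjugate to `x⁻¹ g x`, of word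
length at most `4δ + 1`, so the nontrivial torsion elements lie in the conjugacy classes of the
finitely many nontrivial elements of a ball, and residual finiteness yields a finite-index subgroup
missing all of them. -/

open Subgroup

section WordLength

variable {G : Type*} [Group G] {S : Set G}

-- `0` when `g ∉ closure S`, since `sInf ∅ = 0`
noncomputable def wordLength (S : Set G) (g : G) : ℕ :=
  sInf {n | ∃ l : List G, (∀ x ∈ l, x ∈ S ∨ x⁻¹ ∈ S) ∧ l.prod = g ∧ l.length = n}

theorem exists_word_of_closure_eq_top (hS : closure S = ⊤) (g : G) :
    ∃ l : List G, (∀ x ∈ l, x ∈ S ∨ x⁻¹ ∈ S) ∧ l.prod = g := by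
  have hg : g ∈ (closure S).toSubmonoid := by rw [hS]; trivial
  rw [closure_toSubmonoid] at hg
  exact Submonoid.exists_list_of_mem_closure hg

theorem exists_word_length_eq_wordLength (hS : closure S = ⊤) (g : G) :
    ∃ l : List G, (∀ x ∈ l, x ∈ S ∨ x⁻¹ ∈ S) ∧ l.prod = g ∧ l.length = wordLength S g := by
  obtain ⟨l, hl, hprod⟩ := exists_word_of_closure_eq_top hS g
  exact Nat.sInf_mem (s := {n | ∃ l : List G, (∀ x ∈ l, x ∈ S ∨ x⁻¹ ∈ S) ∧ l.prod = g ∧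
    l.length = n}) ⟨l.length, l, hl, hprod, rfl⟩

theorem wordLength_prod_le {l : List G} (hl : ∀ x ∈ l, x ∈ S ∨ x⁻¹ ∈ S) :
    wordLength S l.prod ≤ l.length :=
  Nat.sInf_le ⟨l, hl, rfl, rfl⟩

theorem wordDist_eq_wordLength (hS : closure S = ⊤) (x y : G) :
    wordDist S x y = wordLength S (x⁻¹ * y) := by
  obtain ⟨l, hl, hprod, hlen⟩ := exists_word_length_eq_wordLength hS (x⁻¹ * y)
  refine le_antisymm (csInf_le ⟨0, ?_⟩ ⟨l, hl, hprod, by rw [hlen]⟩)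
    (le_csInf ⟨_, l, hl, hprod, rfl⟩ ?_)
  · rintro r ⟨l', -, -, rfl⟩
    positivity
  · rintro r ⟨l', hl', hprod', rfl⟩
    rw [← hprod']
    exact_mod_cast wordLength_prod_le hl'

theorem wordLength_inv_le (hS : closure S = ⊤) (g : G) : wordLength S g⁻¹ ≤ wordLength S g := by
  obtain ⟨l, hl, rfl, hlen⟩ := exists_word_length_eq_wordLength hS g
  rw [← hlen, List.prod_inv_reverse]
  refine (wordLength_prod_le fun x hx => ?_).trans (by simp)
  obtain ⟨a, ha, rfl⟩ := List.mem_map.1 (List.mem_reverse.1 hx)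
  simpa [or_comm] using hl a ha

theorem exists_two_mul_wordLength_le (hS : closure S = ⊤) (g : G) :
    ∃ z : G, 2 * wordLength S z ≤ wordLength S g + 1 ∧
      2 * wordLength S (z⁻¹ * g) ≤ wordLength S g + 1 := by
  obtain ⟨l, hl, rfl, hlen⟩ := exists_word_length_eq_wordLength hS g
  rw [← hlen]
  set k := (l.length + 1) / 2
  have hsplit : l.prod = (l.take k).prod * (l.drop k).prod := by
    rw [← List.prod_append, List.take_append_drop]
  refine ⟨(l.take k).prod, ?_, ?_⟩
  · have := wordLength_prod_le (l := l.take k) fun x hx => hl x (List.mem_of_mem_take hx)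
    simp only [List.length_take] at this
    omega
  · have := wordLength_prod_le (l := l.drop k) fun x hx => hl x (List.mem_of_mem_drop hx)
    rw [hsplit, inv_mul_cancel_left]
    simp only [List.length_drop] at this
    omega

theorem finite_setOf_wordLength_le (hSfin : S.Finite) (hS : closure S = ⊤) (K : ℕ) :
    {g | wordLength S g ≤ K}.Finite := by
  have : Finite ↥(S ∪ S⁻¹) := (hSfin.union hSfin.inv).to_subtype
  refine ((List.finite_length_le (S ∪ S⁻¹ : Set G) K).image
    fun l => (l.map Subtype.val).prod).subset fun g hg => ?_
  obtain ⟨l, hl, rfl, hlen⟩ := exists_word_length_eq_wordLength hS g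
  lift l to List ↥(S ∪ S⁻¹) using hl
  exact ⟨l, by rw [Set.mem_ofPred_eq, ← List.length_map Subtype.val, hlen]; exact hg, rfl⟩

end WordLength

def GromovFourPoint {α : Type*} (d : α → α → ℝ) (δ : ℝ) : Prop :=
  ∀ x y z w : α, d x y + d z w ≤ max (d x z + d y w) (d x w + d y z) + 2 * δ

section Hyperbolic

variable {G : Type*} [Group G] {S : Set G}

noncomputable def wordRadius (S : Set G) (P : Finset G) (x : G) : ℕ :=
  P.sup fun p => wordLength S (x⁻¹ * p)

theorem wordLength_conj_le_of_forall_wordRadius_le (hS : closure S = ⊤) {δ : ℝ}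
    (h4 : GromovFourPoint (wordDist S) δ) {g : G} {P : Finset G} (hP : P.Nonempty)
    (hgP : ∀ p ∈ P, g⁻¹ * p ∈ P) {x : G} (hx : ∀ y, wordRadius S P x ≤ wordRadius S P y) :
    (wordLength S (x⁻¹ * g * x) : ℝ) ≤ 4 * δ + 1 := by
  set n := wordLength S (x⁻¹ * g * x)
  set r := wordRadius S P x
  obtain ⟨z, hz, hzc⟩ := exists_two_mul_wordLength_le hS (x⁻¹ * g * x)
  obtain ⟨p, hp, hzp⟩ := Finset.exists_mem_eq_sup P hP fun p => wordLength S ((x * z)⁻¹ * p)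
  have h_x_gx : wordDist S x (g * x) = n := by
    rw [wordDist_eq_wordLength hS, ← mul_assoc]
  have h_x_xz : wordDist S x (x * z) = wordLength S z := by
    rw [wordDist_eq_wordLength hS, inv_mul_cancel_left]
  have h_gx_xz : wordDist S (g * x) (x * z) ≤ wordLength S (z⁻¹ * (x⁻¹ * g * x)) := by
    have : (g * x)⁻¹ * (x * z) = (z⁻¹ * (x⁻¹ * g * x))⁻¹ := by group
    rw [wordDist_eq_wordLength hS, this]
    exact_mod_cast wordLength_inv_le hS _
  have h_xz_p : (r : ℝ) ≤ wordDist S (x * z) p := by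
    rw [wordDist_eq_wordLength hS, ← hzp]
    exact_mod_cast hx (x * z)
  have h_x_p : wordDist S x p ≤ r := by
    rw [wordDist_eq_wordLength hS]
    exact_mod_cast Finset.le_sup (f := fun p => wordLength S (x⁻¹ * p)) hp
  have h_gx_p : wordDist S (g * x) p ≤ r := by
    rw [wordDist_eq_wordLength hS, mul_inv_rev, mul_assoc]
    exact_mod_cast Finset.le_sup (f := fun p => wordLength S (x⁻¹ * p)) (hgP p hp)
  have hz' : (2 * wordLength S z : ℝ) ≤ n + 1 := by exact_mod_cast hz
  have hzc' : (2 * wordLength S (z⁻¹ * (x⁻¹ * g * x)) : ℝ) ≤ n + 1 := by exact_mod_cast hzc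
  have key := h4 x (g * x) (x * z) p
  rw [max_def] at key
  split_ifs at key <;> linarith

theorem IsOfFinOrder.exists_isConj_wordLength_le (hS : closure S = ⊤) {δ : ℝ}
    (h4 : GromovFourPoint (wordDist S) δ) {g : G} (hg : IsOfFinOrder g) :
    ∃ t : G, IsConj g t ∧ (wordLength S t : ℝ) ≤ 4 * δ + 1 := by
  set P := (finite_zpowers.2 hg).toFinset
  set x := Function.argmin (wordRadius S P)
  refine ⟨x⁻¹ * g * x, isConj_iff.2 ⟨x⁻¹, by rw [inv_inv]⟩,
    wordLength_conj_le_of_forall_wordRadius_le hS h4 ⟨1, ?_⟩ (fun p hp => ?_)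
      fun y => Function.argmin_le _ y⟩
  · simp [P]
  · simp only [P, Set.Finite.mem_toFinset, SetLike.mem_coe] at hp ⊢
    exact mul_mem (inv_mem (mem_zpowers g)) hp

theorem IsWordHyperbolic.exists_finite_isConj_of_isOfFinOrder (hG : IsWordHyperbolic G) :
    ∃ T : Set G, T.Finite ∧ ∀ g : G, IsOfFinOrder g → ∃ t ∈ T, IsConj g t := by
  obtain ⟨S, δ, -, hS, h4⟩ := hG
  refine ⟨{t | wordLength S t ≤ ⌈4 * δ + 1⌉₊},
    finite_setOf_wordLength_le S.finite_toSet hS _, fun g hg => ?_⟩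
  obtain ⟨t, hgt, ht⟩ := hg.exists_isConj_wordLength_le hS h4
  exact ⟨t, by exact_mod_cast ht.trans (Nat.le_ceil _), hgt⟩

end Hyperbolic

theorem ResiduallyFinite.exists_torsionFree_finiteIndex_of_finite_isConj {G : Type*} [Group G]
    (hG : ResiduallyFinite G) {T : Set G} (hT : T.Finite)
    (hconj : ∀ g : G, IsOfFinOrder g → ∃ t ∈ T, IsConj g t) :
    ∃ H : Subgroup G, H.FiniteIndex ∧ ∀ g : H, g ≠ 1 → ¬IsOfFinOrder g := by
  have hT' : {t ∈ T | t ≠ 1}.Finite := hT.sep _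
  choose! N hN hNfi hNt using fun t (ht : t ∈ {t ∈ T | t ≠ 1}) => hG t ht.2
  refine ⟨⨅ t ∈ hT'.toFinset, N t,
    finiteIndex_iInf' N fun t ht => hNfi t (hT'.mem_toFinset.1 ht), ?_⟩
  rintro ⟨g, hg⟩ hg1 hgfin
  obtain ⟨t, htT, hgt⟩ := hconj g (Submonoid.isOfFinOrder_coe.2 hgfin)
  have ht1 : t ≠ 1 := fun ht => hg1 (Subtype.ext (isConj_one_left.1 (ht ▸ hgt)))
  have hgN : g ∈ N t :=
    Subgroup.mem_iInf.1 (Subgroup.mem_iInf.1 hg t) (hT'.mem_toFinset.2 ⟨htT, ht1⟩)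
  exact hNt t ⟨htT, ht1⟩ (Group.conjugates_subset_normal (tn := hN t ⟨htT, ht1⟩) hgN hgt)

/-- A residually finite word hyperbolic group has a torsion-free
subgroup of finite index. -/
theorem exists_torsionFree_finiteIndex_of_residuallyFinite_hyperbolic
    {G : Type*} [Group G]
    (hrf : ResiduallyFinite G) (hhyp : IsWordHyperbolic G) :
    ∃ H : Subgroup G, H.FiniteIndex ∧ (∀ g : H, g ≠ 1 → ¬IsOfFinOrder g) := by
  obtain ⟨T, hT, hconj⟩ := hhyp.exists_finite_isConj_of_isOfFinOrder
  exact hrf.exists_torsionFree_finiteIndex_of_finite_isConj hT hconj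
end

section
/- Let M be a connected finite 2-complex with torsion-free fundamental group G, let g be a shortest homotopically essential cellular loop in M, of length L, and fix a lift g̃ of g to the universal cover M̃. Let T̃ be the closed cellular neighborhood of radius R = ⌊(L−1)/4⌋ of g̃ in M̃. Then for every deck transformation h ∈ G not in the cyclic subgroup generated by g, the translate h·T̃ is disjoint from T̃. -/
/-! If `h • T̃` met `T̃`, then `h • g̃ m` would lie within `2R` of some `g̃ n`. For every `k`,
the deck transformation `g ^ k * h` is nontrivial, so it moves `g̃ m` by at least `L`; but it
moves `g̃ m` to within `2R` of `g ^ k • g̃ n = g̃ (n + k L)`, which is at most `|n + k L - m|`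
from `g̃ m` along the line. Choosing `k` with `2 |n + k L - m| ≤ L` gives `L ≤ 4R ≤ L - 1`. -/

theorem Int.exists_two_mul_natAbs_add_mul_le (t : ℤ) {L : ℕ} (hL : 0 < L) :
    ∃ k : ℤ, 2 * (t + k * L).natAbs ≤ L := by
  refine ⟨-t.bdiv L, ?_⟩
  have hdecomp := Int.bmod_add_bdiv t L
  have hle := Int.bmod_le (x := t) hL
  have hge := Int.le_bmod (x := t) hL
  have hk : t + -t.bdiv L * L = t.bmod L := by linear_combination -hdecomp
  omega

section Path

variable {X : Type*} {d : X → X → ℕ} {γ : ℤ → X}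

theorem dist_apply_add_le (hd_self : ∀ x, d x x = 0) (hd_tri : ∀ x y z, d x z ≤ d x y + d y z)
    (hstep : ∀ n, d (γ n) (γ (n + 1)) ≤ 1) (a : ℤ) (k : ℕ) : d (γ a) (γ (a + k)) ≤ k := by
  induction k with
  | zero => simp [hd_self]
  | succ k ih =>
    have hsucc : a + ((k + 1 : ℕ) : ℤ) = a + k + 1 := by push_cast; ring
    rw [hsucc]
    have := hd_tri (γ a) (γ (a + k)) (γ (a + k + 1))
    have := hstep (a + k)
    omega

theorem dist_apply_le_natAbs (hd_self : ∀ x, d x x = 0) (hd_symm : ∀ x y, d x y = d y x)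
    (hd_tri : ∀ x y z, d x z ≤ d x y + d y z) (hstep : ∀ n, d (γ n) (γ (n + 1)) ≤ 1) (a b : ℤ) :
    d (γ a) (γ b) ≤ (b - a).natAbs := by
  rcases le_total a b with hab | hab
  · have := dist_apply_add_le hd_self hd_tri hstep a (b - a).natAbs
    rwa [show a + ((b - a).natAbs : ℤ) = b by omega] at this
  · have := dist_apply_add_le hd_self hd_tri hstep b (b - a).natAbs
    rwa [show b + ((b - a).natAbs : ℤ) = a by omega, hd_symm] at this

end Path

section Deck

variable {G X : Type*} [Group G] [MulAction G X]

theorem zpow_smul_of_smul_eq_add {γ : ℤ → X} {g : G} {p : ℤ} (hper : ∀ n, g • γ n = γ (n + p))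
    (k n : ℤ) : g ^ k • γ n = γ (n + k * p) := by
  induction k using Int.induction_on generalizing n with
  | zero => simp
  | succ k ih => rw [zpow_add_one, mul_smul, hper, ih]; ring_nf
  | pred k ih =>
    have hinv : g⁻¹ • γ n = γ (n - p) := by
      rw [inv_smul_eq_iff, hper, sub_add_cancel]
    rw [zpow_sub_one, mul_smul, hinv, ih]; ring_nf

theorem le_dist_add_dist_of_notMem_zpowers {d : X → X → ℕ} {L : ℕ}
    (hd_tri : ∀ x y z, d x z ≤ d x y + d y z) (hisom : ∀ (g : G) (x y : X), d (g • x) (g • y) = d x y)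
    (hsys : ∀ h : G, h ≠ 1 → ∀ x : X, L ≤ d x (h • x)) {g h : G} (hh : h ∉ Subgroup.zpowers g)
    (k : ℤ) (x y : X) : L ≤ d x (g ^ k • y) + d y (h • x) := by
  have hne : g ^ k * h ≠ 1 := fun h1 =>
    hh (Subgroup.mem_zpowers_iff.mpr ⟨-k, by rw [zpow_neg, ← eq_inv_of_mul_eq_one_right h1]⟩)
  calc L ≤ d x ((g ^ k * h) • x) := hsys _ hne x
    _ ≤ d x (g ^ k • y) + d (g ^ k • y) ((g ^ k * h) • x) := hd_tri _ _ _
    _ = d x (g ^ k • y) + d y (h • x) := by rw [mul_smul, hisom]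

end Deck

theorem tube_translates_disjoint_general
    {G X : Type*} [Group G] [MulAction G X]
    -- `d` is the path metric on the 1-skeleton of the universal cover
    (d : X → X → ℕ)
    (hd_eq : ∀ x y, d x y = 0 ↔ x = y)
    (hd_symm : ∀ x y, d x y = d y x)
    (hd_tri : ∀ x y z, d x z ≤ d x y + d y z)
    -- the deck action is free and isometric
    (hisom : ∀ (g : G) (x y : X), d (g • x) (g • y) = d x y)
    -- the shortest homotopically essential cellular loop, of length `L`
    (L : ℕ) (hL : 1 ≤ L) (g : G)
    (gt : ℤ → X)
    -- `gt` is a cellular path: consecutive vertices span an edge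
    (hstep : ∀ n : ℤ, d (gt n) (gt (n + 1)) ≤ 1)
    -- `gt` is the `g`-periodic lift of the loop
    (hper : ∀ n : ℤ, g • gt n = gt (n + L))
    -- minimality of `L`: no nontrivial deck transformation moves a vertex less
    (hsys : ∀ h : G, h ≠ 1 → ∀ x : X, L ≤ d x (h • x)) :
    -- the radius `⌊(L-1)/4⌋` cellular neighborhood of the lift is disjoint from
    -- its translates by deck transformations outside `⟨g⟩`
    ∀ h : G, h ∉ Subgroup.zpowers g →
      Disjoint ((fun x => h • x) '' {x : X | ∃ n : ℤ, d x (gt n) ≤ (L - 1) / 4})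
        {x : X | ∃ n : ℤ, d x (gt n) ≤ (L - 1) / 4} := by
  intro h hh
  rw [Set.disjoint_left]
  rintro _ ⟨y, ⟨m, hym⟩, rfl⟩ ⟨n, hyn : d (h • y) (gt n) ≤ _⟩
  have hd_self : ∀ x, d x x = 0 := fun x => (hd_eq x x).2 rfl
  have hclose : d (gt n) (h • gt m) ≤ 2 * ((L - 1) / 4) := by
    calc d (gt n) (h • gt m) ≤ d (gt n) (h • y) + d (h • y) (h • gt m) := hd_tri _ _ _
      _ = d (h • y) (gt n) + d y (gt m) := by rw [hisom, hd_symm (gt n)]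
      _ ≤ 2 * ((L - 1) / 4) := by omega
  obtain ⟨k, hk⟩ := Int.exists_two_mul_natAbs_add_mul_le (n - m) hL
  have hsys_m := le_dist_add_dist_of_notMem_zpowers hd_tri hisom hsys hh k (gt m) (gt n)
  rw [zpow_smul_of_smul_eq_add hper] at hsys_m
  have hline := dist_apply_le_natAbs hd_self hd_symm hd_tri hstep m (n + k * L)
  omega

theorem tube_translates_disjoint
    {G X : Type*} [Group G] [MulAction G X]
    -- `d` is the path metric on the 1-skeleton of the universal cover
    (d : X → X → ℕ)
    (hd_eq : ∀ x y, d x y = 0 ↔ x = y)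
    (hd_symm : ∀ x y, d x y = d y x)
    (hd_tri : ∀ x y z, d x z ≤ d x y + d y z)
    -- the deck action is free and isometric
    (hfree : ∀ (g : G) (x : X), g • x = x → g = 1)
    (hisom : ∀ (g : G) (x y : X), d (g • x) (g • y) = d x y)
    -- the fundamental group is torsion free
    (htf : ∀ g : G, g ≠ 1 → ¬IsOfFinOrder g)
    -- the shortest homotopically essential cellular loop, of length `L`
    (L : ℕ) (hL : 1 ≤ L) (g : G) (hg : g ≠ 1)
    (gt : ℤ → X)
    -- `gt` is a cellular path: consecutive vertices span an edge
    (hstep : ∀ n : ℤ, d (gt n) (gt (n + 1)) ≤ 1)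
    -- `gt` is the `g`-periodic lift of the loop
    (hper : ∀ n : ℤ, g • gt n = gt (n + L))
    -- minimality of `L`: no nontrivial deck transformation moves a vertex less
    (hsys : ∀ h : G, h ≠ 1 → ∀ x : X, L ≤ d x (h • x)) :
    -- the radius `⌊(L-1)/4⌋` cellular neighborhood of the lift is disjoint from
    -- its translates by deck transformations outside `⟨g⟩`
    ∀ h : G, h ∉ Subgroup.zpowers g →
      Disjoint ((fun x => h • x) '' {x : X | ∃ n : ℤ, d x (gt n) ≤ (L - 1) / 4})
        {x : X | ∃ n : ℤ, d x (gt n) ≤ (L - 1) / 4} :=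
  tube_translates_disjoint_general d hd_eq hd_symm hd_tri hisom L hL g gt hstep hper hsys
end

section
/- Let G be a group, let F_* → ℤ and P_* → ℤ be two partial projective resolutions of the trivial ℤG-module ℤ of length 2, with F_i and P_i finitely generated free ℤG-modules with chosen bases in degrees 1 and 2. Suppose there is a constant C such that for every finite-index normal subgroup H of G, every coboundary η in Hom_{ℤH}(F_2, ℤ) has a primitive ω ∈ Hom_{ℤH}(F_1, ℤ) with dω = η and ‖ω‖ ≤ C‖η‖, where ‖·‖ is the ℓ¹-norm induced by the chosen bases (and coset representatives). Then there is a constant C′ such that the same uniform linear filling property holds for the resolution P_*. -/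
/-! Based finitely generated free `ℤG`-modules, modeled as `Fin k × G →₀ ℤ`
(with `ℤ`-basis the elements `g·eᵢ`) and the `G`-action by left translation;
`ℤG`-linear maps are `ℤ`-linear `G`-equivariant maps, and `ℤH`-functionals to the
trivial module `ℤ` are `ℤ`-linear `H`-invariant functionals. -/

/-- The free `ℤG`-module of rank `k` with its standard basis. -/
abbrev FreeMod (G : Type*) (k : ℕ) := Fin k × G →₀ ℤ

/-- The action of `g ∈ G` on the free module, permuting the `ℤ`-basis. -/
noncomputable def gsmul {G : Type*} [Group G] {k : ℕ} (g : G) :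
    FreeMod G k →ₗ[ℤ] FreeMod G k :=
  Finsupp.lmapDomain ℤ ℤ (fun p => (p.1, g * p.2))

/-- `ℤG`-linearity of a `ℤ`-linear map between based free `ℤG`-modules. -/
def IsEquivariant {G : Type*} [Group G] {k m : ℕ}
    (f : FreeMod G k →ₗ[ℤ] FreeMod G m) : Prop :=
  ∀ (g : G) (x : FreeMod G k), f (gsmul g x) = gsmul g (f x)

/-- `ℤH`-linearity of a functional into the trivial module `ℤ`. -/
def IsZHInvariant {G : Type*} [Group G] {k : ℕ} (H : Subgroup G)
    (φ : FreeMod G k →ₗ[ℤ] ℤ) : Prop :=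
  ∀ h ∈ H, ∀ x : FreeMod G k, φ (gsmul h x) = φ x

/-- The `ℓ¹`-norm on `Hom_{ℤH}(FreeMod G k, ℤ)` induced by the `ℤH`-basis coming
from the `ℤG`-basis and a choice of coset representatives (the norm does not
depend on this choice, for `H` normal). -/
noncomputable def l1Norm {G : Type*} [Group G] {k : ℕ} (H : Subgroup G)
    (φ : FreeMod G k →ₗ[ℤ] ℤ) : ℝ :=
  ∑ᶠ p : Fin k × (G ⧸ H), ((|φ (Finsupp.single (p.1, p.2.out) 1)| : ℤ) : ℝ)

/-- A length-two partial resolution `F₂ → F₁ → F₀ → ℤ → 0` of the trivial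
`ℤG`-module `ℤ` by based finitely generated free `ℤG`-modules: the maps are
`ℤG`-linear, the augmentation is onto, and the sequence is exact at `F₀`, at `F₁`
and at `ℤ`. -/
structure IsPartialFreeResolution {G : Type*} [Group G] {k₀ k₁ k₂ : ℕ}
    (d₂ : FreeMod G k₂ →ₗ[ℤ] FreeMod G k₁) (d₁ : FreeMod G k₁ →ₗ[ℤ] FreeMod G k₀)
    (ε : FreeMod G k₀ →ₗ[ℤ] ℤ) : Prop where
  equiv_d₂ : IsEquivariant d₂
  equiv_d₁ : IsEquivariant d₁
  inv_ε : IsZHInvariant (⊤ : Subgroup G) ε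
  surj_ε : Function.Surjective ε
  exact_F₀ : LinearMap.ker ε = LinearMap.range d₁
  exact_F₁ : LinearMap.ker d₁ = LinearMap.range d₂

/-- Uniform linear bound on primitives of coboundaries in
`Hom_{ℤH}(F₂,ℤ)` over all finite-index normal subgroups `H ≤ G`. -/
def UniformFilling {G : Type*} [Group G] {k₀ k₁ k₂ : ℕ}
    (d₂ : FreeMod G k₂ →ₗ[ℤ] FreeMod G k₁) (_d₁ : FreeMod G k₁ →ₗ[ℤ] FreeMod G k₀)
    (C : ℝ) : Prop :=
  ∀ (H : Subgroup G), H.Normal → H.FiniteIndex →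
    ∀ η : FreeMod G k₂ →ₗ[ℤ] ℤ, IsZHInvariant H η →
      (∃ ω₀ : FreeMod G k₁ →ₗ[ℤ] ℤ, IsZHInvariant H ω₀ ∧ η = ω₀ ∘ₗ d₂) →
      ∃ ω : FreeMod G k₁ →ₗ[ℤ] ℤ, IsZHInvariant H ω ∧ η = ω ∘ₗ d₂ ∧
        l1Norm H ω ≤ C * l1Norm H η

/-! Comparison maps `a : P_* → F_*` and `b : F_* → P_*` exist by freeness of the modules and
exactness of the resolutions, and `b ∘ a` is chain homotopic to the identity of `P_*` by some
`s`. For a coboundary `η = ω₀ ∘ d₂` on `P₂`, the pullback `η ∘ b₂` is a coboundary on `F₂`;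
fill it by `ω_F` and push back: `ω_F ∘ a₁ - η ∘ s₁` is a primitive of `η`. Precomposition with a
`ℤG`-linear map `ψ` multiplies the `ℓ¹`-norm on `Hom_{ℤH}(-, ℤ)` by at most the total `ℓ¹`-size
of the images of the basis vectors under `ψ`, a bound independent of `H`, because for `H` normal
right translation by `g` permutes the cosets `G ⧸ H`. -/

section

variable {G : Type*} [Group G]

section Action

lemma gsmul_single {k : ℕ} (g : G) (i : Fin k) (g' : G) (n : ℤ) :
    gsmul g (Finsupp.single (i, g') n) = Finsupp.single (i, g * g') n := by
  simp [gsmul, Finsupp.mapDomain_single]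

lemma gsmul_mul {k : ℕ} (g g' : G) (x : FreeMod G k) :
    gsmul (g * g') x = gsmul g (gsmul g' x) := by
  simp only [gsmul, Finsupp.lmapDomain_apply, ← Finsupp.mapDomain_comp]
  congr 1
  ext p <;> simp [mul_assoc]

lemma gsmul_one {k : ℕ} (x : FreeMod G k) : gsmul (1 : G) x = x := by
  simp only [gsmul, Finsupp.lmapDomain_apply, one_mul]
  exact Finsupp.mapDomain_id

lemma single_eq_gsmul {k : ℕ} (i : Fin k) (g : G) (n : ℤ) :
    (Finsupp.single (i, g) n : FreeMod G k) = gsmul g (Finsupp.single (i, 1) n) := by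
  rw [gsmul_single, mul_one]

end Action

namespace IsEquivariant

variable {a b c : ℕ}

lemma id : IsEquivariant (LinearMap.id : FreeMod G a →ₗ[ℤ] FreeMod G a) :=
  fun _ _ => rfl

lemma comp {f : FreeMod G b →ₗ[ℤ] FreeMod G c} {g : FreeMod G a →ₗ[ℤ] FreeMod G b}
    (hf : IsEquivariant f) (hg : IsEquivariant g) : IsEquivariant (f ∘ₗ g) := by
  intro x y
  simp [hg x, hf x]

lemma sub {f g : FreeMod G a →ₗ[ℤ] FreeMod G b} (hf : IsEquivariant f)
    (hg : IsEquivariant g) : IsEquivariant (f - g) := by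
  intro x y
  simp [hf x, hg x]

end IsEquivariant

namespace IsZHInvariant

variable {a b : ℕ} {H : Subgroup G}

lemma comp {φ : FreeMod G b →ₗ[ℤ] ℤ} {ψ : FreeMod G a →ₗ[ℤ] FreeMod G b}
    (hφ : IsZHInvariant H φ) (hψ : IsEquivariant ψ) : IsZHInvariant H (φ ∘ₗ ψ) := by
  intro h hh x
  simp [hψ h, hφ h hh]

lemma sub {φ φ' : FreeMod G a →ₗ[ℤ] ℤ} (hφ : IsZHInvariant H φ) (hφ' : IsZHInvariant H φ') :
    IsZHInvariant H (φ - φ') := by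
  intro h hh x
  simp [hφ h hh, hφ' h hh]

end IsZHInvariant

section Lifting

variable {M : Type*} [AddCommGroup M]

def IsEquivariantTo {k : ℕ} (ρ : G → M →ₗ[ℤ] M) (f : FreeMod G k →ₗ[ℤ] M) : Prop :=
  ∀ (g : G) (x : FreeMod G k), f (gsmul g x) = ρ g (f x)

lemma IsEquivariantTo.ext {k : ℕ} {ρ : G → M →ₗ[ℤ] M} {f f' : FreeMod G k →ₗ[ℤ] M}
    (hf : IsEquivariantTo ρ f) (hf' : IsEquivariantTo ρ f')
    (h : ∀ i, f (Finsupp.single (i, 1) 1) = f' (Finsupp.single (i, 1) 1)) : f = f' := by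
  refine Finsupp.lhom_ext fun ⟨i, g⟩ n => ?_
  rw [single_eq_gsmul, hf, hf', ← Finsupp.smul_single_one]
  simp only [map_smul, h]

noncomputable def freeLift {k n : ℕ} (u : Fin k → FreeMod G n) :
    FreeMod G k →ₗ[ℤ] FreeMod G n :=
  Finsupp.linearCombination ℤ fun p => gsmul p.2 (u p.1)

lemma freeLift_single {k n : ℕ} (u : Fin k → FreeMod G n) (i : Fin k) (g : G) (c : ℤ) :
    freeLift u (Finsupp.single (i, g) c) = c • gsmul g (u i) :=
  Finsupp.linearCombination_single ℤ c (i, g)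

lemma isEquivariant_freeLift {k n : ℕ} (u : Fin k → FreeMod G n) :
    IsEquivariant (freeLift u) := by
  intro g x
  have := Finsupp.lhom_ext (φ := freeLift u ∘ₗ gsmul g) (ψ := gsmul g ∘ₗ freeLift u)
    fun ⟨i, g'⟩ c => by
      simp only [LinearMap.comp_apply, gsmul_single, freeLift_single, gsmul_mul, map_smul]
  exact LinearMap.congr_fun this x

lemma exists_equivariant_lift {k n : ℕ} {ρ : G → M →ₗ[ℤ] M}
    {T : FreeMod G n →ₗ[ℤ] M} (hT : IsEquivariantTo ρ T)
    {f : FreeMod G k →ₗ[ℤ] M} (hf : IsEquivariantTo ρ f)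
    (hmem : ∀ i, f (Finsupp.single (i, 1) 1) ∈ LinearMap.range T) :
    ∃ L : FreeMod G k →ₗ[ℤ] FreeMod G n, IsEquivariant L ∧ T ∘ₗ L = f := by
  choose u hu using hmem
  refine ⟨freeLift u, isEquivariant_freeLift u, IsEquivariantTo.ext ?_ hf fun i => ?_⟩
  · intro g x
    rw [LinearMap.comp_apply, LinearMap.comp_apply, isEquivariant_freeLift u g x, hT]
  · rw [LinearMap.comp_apply, freeLift_single, one_smul, gsmul_one, hu]

lemma exists_equivariant_lift_of_exact {k n m : ℕ} {N : Type*} [AddCommGroup N]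
    {T : FreeMod G n →ₗ[ℤ] FreeMod G m} (hT : IsEquivariant T) {D : FreeMod G m →ₗ[ℤ] N}
    (hTD : LinearMap.ker D = LinearMap.range T)
    {f : FreeMod G k →ₗ[ℤ] FreeMod G m} (hf : IsEquivariant f) (hDf : D ∘ₗ f = 0) :
    ∃ L : FreeMod G k →ₗ[ℤ] FreeMod G n, IsEquivariant L ∧ T ∘ₗ L = f :=
  exists_equivariant_lift (ρ := gsmul) hT hf fun _ =>
    hTD ▸ LinearMap.mem_ker.2 (LinearMap.congr_fun hDf _)

end Lifting

section Resolution

variable {k₀ k₁ k₂ m₀ m₁ m₂ : ℕ}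
  {dF₂ : FreeMod G k₂ →ₗ[ℤ] FreeMod G k₁} {dF₁ : FreeMod G k₁ →ₗ[ℤ] FreeMod G k₀}
  {εF : FreeMod G k₀ →ₗ[ℤ] ℤ}
  {dP₂ : FreeMod G m₂ →ₗ[ℤ] FreeMod G m₁} {dP₁ : FreeMod G m₁ →ₗ[ℤ] FreeMod G m₀}
  {εP : FreeMod G m₀ →ₗ[ℤ] ℤ}

structure IsChainMap (dP₂ : FreeMod G m₂ →ₗ[ℤ] FreeMod G m₁)
    (dP₁ : FreeMod G m₁ →ₗ[ℤ] FreeMod G m₀) (εP : FreeMod G m₀ →ₗ[ℤ] ℤ)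
    (dF₂ : FreeMod G k₂ →ₗ[ℤ] FreeMod G k₁) (dF₁ : FreeMod G k₁ →ₗ[ℤ] FreeMod G k₀)
    (εF : FreeMod G k₀ →ₗ[ℤ] ℤ) (a₀ : FreeMod G m₀ →ₗ[ℤ] FreeMod G k₀)
    (a₁ : FreeMod G m₁ →ₗ[ℤ] FreeMod G k₁) (a₂ : FreeMod G m₂ →ₗ[ℤ] FreeMod G k₂) : Prop where
  equiv₀ : IsEquivariant a₀
  equiv₁ : IsEquivariant a₁
  equiv₂ : IsEquivariant a₂
  comm_ε : εF ∘ₗ a₀ = εP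
  comm₁ : dF₁ ∘ₗ a₁ = a₀ ∘ₗ dP₁
  comm₂ : dF₂ ∘ₗ a₂ = a₁ ∘ₗ dP₂

namespace IsPartialFreeResolution

lemma ε_comp_d₁ (hF : IsPartialFreeResolution dF₂ dF₁ εF) : εF ∘ₗ dF₁ = 0 :=
  LinearMap.range_le_ker_iff.1 hF.exact_F₀.ge

lemma d₁_comp_d₂ (hF : IsPartialFreeResolution dF₂ dF₁ εF) : dF₁ ∘ₗ dF₂ = 0 :=
  LinearMap.range_le_ker_iff.1 hF.exact_F₁.ge

lemma isEquivariantTo_ε (hF : IsPartialFreeResolution dF₂ dF₁ εF) :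
    IsEquivariantTo (fun _ => LinearMap.id) εF :=
  fun g x => hF.inv_ε g (Subgroup.mem_top g) x

theorem exists_isChainMap (hP : IsPartialFreeResolution dP₂ dP₁ εP)
    (hF : IsPartialFreeResolution dF₂ dF₁ εF) :
    ∃ a₀ a₁ a₂, IsChainMap dP₂ dP₁ εP dF₂ dF₁ εF a₀ a₁ a₂ := by
  obtain ⟨a₀, ha₀, hεa₀⟩ := exists_equivariant_lift hF.isEquivariantTo_ε hP.isEquivariantTo_ε
    fun _ => hF.surj_ε _
  obtain ⟨a₁, ha₁, hda₁⟩ := exists_equivariant_lift_of_exact hF.equiv_d₁ hF.exact_F₀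
    (ha₀.comp hP.equiv_d₁) (by rw [← LinearMap.comp_assoc, hεa₀, hP.ε_comp_d₁])
  obtain ⟨a₂, ha₂, hda₂⟩ := exists_equivariant_lift_of_exact hF.equiv_d₂ hF.exact_F₁
    (ha₁.comp hP.equiv_d₂)
    (by rw [← LinearMap.comp_assoc, hda₁, LinearMap.comp_assoc, hP.d₁_comp_d₂,
      LinearMap.comp_zero])
  exact ⟨a₀, a₁, a₂, ha₀, ha₁, ha₂, hεa₀, hda₁, hda₂⟩

end IsPartialFreeResolution

namespace IsChainMap

variable {n₀ n₁ n₂ : ℕ} {dQ₂ : FreeMod G n₂ →ₗ[ℤ] FreeMod G n₁}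
  {dQ₁ : FreeMod G n₁ →ₗ[ℤ] FreeMod G n₀} {εQ : FreeMod G n₀ →ₗ[ℤ] ℤ}
  {a₀ a₀' : FreeMod G m₀ →ₗ[ℤ] FreeMod G k₀} {a₁ a₁' : FreeMod G m₁ →ₗ[ℤ] FreeMod G k₁}
  {a₂ a₂' : FreeMod G m₂ →ₗ[ℤ] FreeMod G k₂}

lemma id : IsChainMap dP₂ dP₁ εP dP₂ dP₁ εP LinearMap.id LinearMap.id LinearMap.id :=
  ⟨.id, .id, .id, rfl, rfl, rfl⟩

lemma comp {b₀ : FreeMod G k₀ →ₗ[ℤ] FreeMod G n₀} {b₁ : FreeMod G k₁ →ₗ[ℤ] FreeMod G n₁}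
    {b₂ : FreeMod G k₂ →ₗ[ℤ] FreeMod G n₂} (hb : IsChainMap dF₂ dF₁ εF dQ₂ dQ₁ εQ b₀ b₁ b₂)
    (ha : IsChainMap dP₂ dP₁ εP dF₂ dF₁ εF a₀ a₁ a₂) :
    IsChainMap dP₂ dP₁ εP dQ₂ dQ₁ εQ (b₀ ∘ₗ a₀) (b₁ ∘ₗ a₁) (b₂ ∘ₗ a₂) where
  equiv₀ := hb.equiv₀.comp ha.equiv₀
  equiv₁ := hb.equiv₁.comp ha.equiv₁
  equiv₂ := hb.equiv₂.comp ha.equiv₂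
  comm_ε := by rw [← LinearMap.comp_assoc, hb.comm_ε, ha.comm_ε]
  comm₁ := by rw [← LinearMap.comp_assoc, hb.comm₁, LinearMap.comp_assoc, ha.comm₁,
    LinearMap.comp_assoc]
  comm₂ := by rw [← LinearMap.comp_assoc, hb.comm₂, LinearMap.comp_assoc, ha.comm₂,
    LinearMap.comp_assoc]

theorem exists_homotopy (hF : IsPartialFreeResolution dF₂ dF₁ εF) (hdP₁ : IsEquivariant dP₁)
    (ha : IsChainMap dP₂ dP₁ εP dF₂ dF₁ εF a₀ a₁ a₂)
    (ha' : IsChainMap dP₂ dP₁ εP dF₂ dF₁ εF a₀' a₁' a₂') :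
    ∃ (s₀ : FreeMod G m₀ →ₗ[ℤ] FreeMod G k₁) (s₁ : FreeMod G m₁ →ₗ[ℤ] FreeMod G k₂),
      IsEquivariant s₀ ∧ IsEquivariant s₁ ∧ dF₁ ∘ₗ s₀ = a₀ - a₀' ∧
        dF₂ ∘ₗ s₁ + s₀ ∘ₗ dP₁ = a₁ - a₁' := by
  obtain ⟨s₀, hs₀, hds₀⟩ := exists_equivariant_lift_of_exact hF.equiv_d₁ hF.exact_F₀
    (ha.equiv₀.sub ha'.equiv₀) (by rw [LinearMap.comp_sub, ha.comm_ε, ha'.comm_ε, sub_self])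
  obtain ⟨s₁, hs₁, hds₁⟩ := exists_equivariant_lift_of_exact hF.equiv_d₂ hF.exact_F₁
    ((ha.equiv₁.sub ha'.equiv₁).sub (hs₀.comp hdP₁))
    (by rw [LinearMap.comp_sub, LinearMap.comp_sub, ha.comm₁, ha'.comm₁,
      ← LinearMap.comp_assoc, hds₀, LinearMap.sub_comp, sub_self])
  exact ⟨s₀, s₁, hs₀, hs₁, hds₀, by rw [hds₁, sub_add_cancel]⟩

end IsChainMap

end Resolution

section Norm

variable {H : Subgroup G}

lemma l1Norm_eq_sum {k : ℕ} [Fintype (G ⧸ H)] (φ : FreeMod G k →ₗ[ℤ] ℤ) :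
    l1Norm H φ = ∑ j : Fin k, ∑ q : G ⧸ H, |(φ (Finsupp.single (j, q.out) 1) : ℝ)| := by
  simp only [l1Norm, finsum_eq_sum_of_fintype, Fintype.sum_prod_type, Int.cast_abs]

lemma l1Norm_nonneg {k : ℕ} (φ : FreeMod G k →ₗ[ℤ] ℤ) : 0 ≤ l1Norm H φ :=
  finsum_nonneg fun _ => by positivity

lemma l1Norm_sub_le {k : ℕ} [Finite (G ⧸ H)] (φ φ' : FreeMod G k →ₗ[ℤ] ℤ) :
    l1Norm H (φ - φ') ≤ l1Norm H φ + l1Norm H φ' := by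
  have := Fintype.ofFinite (G ⧸ H)
  simp only [l1Norm_eq_sum, ← Finset.sum_add_distrib]
  gcongr with j _ q _
  push_cast [LinearMap.sub_apply]
  exact abs_sub _ _

lemma IsZHInvariant.apply_single_eq_of_mk_eq (hN : H.Normal) {k : ℕ}
    {φ : FreeMod G k →ₗ[ℤ] ℤ} (hφ : IsZHInvariant H φ) (j : Fin k) {x y : G}
    (hxy : (x : G ⧸ H) = y) (n : ℤ) :
    φ (Finsupp.single (j, x) n) = φ (Finsupp.single (j, y) n) := by
  have hmem : y * x⁻¹ ∈ H := by
    simpa using hN.conj_mem _ (QuotientGroup.eq.1 hxy) x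
  rw [← hφ _ hmem, gsmul_single, inv_mul_cancel_right]

lemma sum_abs_apply_single_mul_le_l1Norm (hN : H.Normal) [Fintype (G ⧸ H)] {k : ℕ}
    {φ : FreeMod G k →ₗ[ℤ] ℤ} (hφ : IsZHInvariant H φ) (j : Fin k) (g : G) :
    ∑ q : G ⧸ H, |(φ (Finsupp.single (j, q.out * g) 1) : ℝ)| ≤ l1Norm H φ := by
  have : H.Normal := hN
  calc ∑ q : G ⧸ H, |(φ (Finsupp.single (j, q.out * g) 1) : ℝ)|
      = ∑ q : G ⧸ H, |(φ (Finsupp.single (j, (q * g).out) 1) : ℝ)| := by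
        refine Finset.sum_congr rfl fun q _ => ?_
        rw [hφ.apply_single_eq_of_mk_eq hN j (y := (q * g).out) (by simp)]
    _ = ∑ q : G ⧸ H, |(φ (Finsupp.single (j, q.out) 1) : ℝ)| :=
        Equiv.sum_comp (Equiv.mulRight (g : G ⧸ H))
          fun q : G ⧸ H => |(φ (Finsupp.single (j, q.out) 1) : ℝ)|
    _ ≤ l1Norm H φ := by
        rw [l1Norm_eq_sum]
        exact Finset.single_le_sum
          (f := fun j => ∑ q : G ⧸ H, |(φ (Finsupp.single (j, q.out) 1) : ℝ)|)
          (fun _ _ => Finset.sum_nonneg fun _ _ => abs_nonneg _) (Finset.mem_univ j)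

lemma abs_apply_gsmul_le {k : ℕ} (φ : FreeMod G k →ₗ[ℤ] ℤ) (g : G) (v : FreeMod G k) :
    |(φ (gsmul g v) : ℝ)| ≤
      ∑ p ∈ v.support, |(v p : ℝ)| * |(φ (Finsupp.single (p.1, g * p.2) 1) : ℝ)| := by
  conv_lhs => rw [← v.sum_single]
  simp only [Finsupp.sum, map_sum, Int.cast_sum]
  refine (Finset.abs_sum_le_sum_abs _ _).trans_eq (Finset.sum_congr rfl fun ⟨i, g'⟩ _ => ?_)
  rw [gsmul_single, ← Finsupp.smul_single_one, map_smul, smul_eq_mul, Int.cast_mul, abs_mul]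

noncomputable def basisImageL1 {k m : ℕ} (ψ : FreeMod G k →ₗ[ℤ] FreeMod G m) : ℝ :=
  ∑ i : Fin k, ∑ p ∈ (ψ (Finsupp.single (i, 1) 1)).support,
    |(ψ (Finsupp.single (i, 1) 1) p : ℝ)|

lemma basisImageL1_nonneg {k m : ℕ} (ψ : FreeMod G k →ₗ[ℤ] FreeMod G m) :
    0 ≤ basisImageL1 ψ :=
  Finset.sum_nonneg fun _ _ => Finset.sum_nonneg fun _ _ => abs_nonneg _

theorem l1Norm_comp_le (hN : H.Normal) [Finite (G ⧸ H)] {k m : ℕ}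
    {φ : FreeMod G m →ₗ[ℤ] ℤ} (hφ : IsZHInvariant H φ)
    {ψ : FreeMod G k →ₗ[ℤ] FreeMod G m} (hψ : IsEquivariant ψ) :
    l1Norm H (φ ∘ₗ ψ) ≤ basisImageL1 ψ * l1Norm H φ := by
  have := Fintype.ofFinite (G ⧸ H)
  set w : Fin k → FreeMod G m := fun i => ψ (Finsupp.single (i, 1) 1)
  calc l1Norm H (φ ∘ₗ ψ)
      = ∑ i, ∑ q : G ⧸ H, |(φ (gsmul q.out (w i)) : ℝ)| := by
        simp only [l1Norm_eq_sum, LinearMap.comp_apply, single_eq_gsmul _ (Quotient.out _),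
          hψ _, w]
    _ ≤ ∑ i, ∑ q : G ⧸ H, ∑ p ∈ (w i).support,
          |(w i p : ℝ)| * |(φ (Finsupp.single (p.1, q.out * p.2) 1) : ℝ)| := by
        gcongr with i _ q _
        exact abs_apply_gsmul_le φ _ _
    _ = ∑ i, ∑ p ∈ (w i).support,
          |(w i p : ℝ)| * ∑ q : G ⧸ H, |(φ (Finsupp.single (p.1, q.out * p.2) 1) : ℝ)| := by
        simp only [Finset.mul_sum]
        exact Finset.sum_congr rfl fun i _ => Finset.sum_comm
    _ ≤ ∑ i, ∑ p ∈ (w i).support, |(w i p : ℝ)| * l1Norm H φ := by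
        gcongr with i _ p _
        exact sum_abs_apply_single_mul_le_l1Norm hN hφ p.1 p.2
    _ = basisImageL1 ψ * l1Norm H φ := by
        simp only [basisImageL1, Finset.sum_mul, w]

end Norm

/-- `hs` is the homotopy identity `d₂ s₁ + s₀ d₁ = b₁ a₁ - 1` composed with `d₂`, which kills
`s₀`. -/
theorem UniformFilling.of_homotopy_retract {k₀ k₁ k₂ m₀ m₁ m₂ : ℕ}
    {dF₂ : FreeMod G k₂ →ₗ[ℤ] FreeMod G k₁} {dF₁ : FreeMod G k₁ →ₗ[ℤ] FreeMod G k₀}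
    {εF : FreeMod G k₀ →ₗ[ℤ] ℤ}
    {dP₂ : FreeMod G m₂ →ₗ[ℤ] FreeMod G m₁} {dP₁ : FreeMod G m₁ →ₗ[ℤ] FreeMod G m₀}
    {εP : FreeMod G m₀ →ₗ[ℤ] ℤ}
    {a₀ : FreeMod G m₀ →ₗ[ℤ] FreeMod G k₀} {a₁ : FreeMod G m₁ →ₗ[ℤ] FreeMod G k₁}
    {a₂ : FreeMod G m₂ →ₗ[ℤ] FreeMod G k₂} {b₀ : FreeMod G k₀ →ₗ[ℤ] FreeMod G m₀}
    {b₁ : FreeMod G k₁ →ₗ[ℤ] FreeMod G m₁} {b₂ : FreeMod G k₂ →ₗ[ℤ] FreeMod G m₂}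
    {s₁ : FreeMod G m₁ →ₗ[ℤ] FreeMod G m₂}
    (ha : IsChainMap dP₂ dP₁ εP dF₂ dF₁ εF a₀ a₁ a₂)
    (hb : IsChainMap dF₂ dF₁ εF dP₂ dP₁ εP b₀ b₁ b₂)
    (hs₁ : IsEquivariant s₁) (hs : dP₂ ∘ₗ s₁ ∘ₗ dP₂ = b₁ ∘ₗ a₁ ∘ₗ dP₂ - dP₂)
    {C : ℝ} (hC : UniformFilling dF₂ dF₁ C) :
    UniformFilling dP₂ dP₁ (basisImageL1 a₁ * (|C| * basisImageL1 b₂) + basisImageL1 s₁) := by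
  rintro H hN hH _ hη ⟨ω₀, hω₀, rfl⟩
  obtain ⟨ωF, hωF, hfill, hbound⟩ := hC H hN hH (ω₀ ∘ₗ dP₂ ∘ₗ b₂) (hη.comp hb.equiv₂)
    ⟨ω₀ ∘ₗ b₁, hω₀.comp hb.equiv₁, by rw [hb.comm₂, LinearMap.comp_assoc]⟩
  refine ⟨ωF ∘ₗ a₁ - (ω₀ ∘ₗ dP₂) ∘ₗ s₁, (hωF.comp ha.equiv₁).sub (hη.comp hs₁), ?_, ?_⟩
  · refine LinearMap.ext fun x => ?_
    have h₁ := LinearMap.congr_fun ha.comm₂ x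
    have h₂ := LinearMap.congr_fun hb.comm₂ (a₂ x)
    have h₃ := LinearMap.congr_fun hs x
    have h₄ := LinearMap.congr_fun hfill (a₂ x)
    simp only [LinearMap.comp_apply, LinearMap.sub_apply] at h₁ h₂ h₃ h₄ ⊢
    rw [← h₁, ← h₄, h₃, h₂, h₁, map_sub, sub_sub_cancel]
  · have : Finite (G ⧸ H) := Subgroup.finite_quotient_of_finiteIndex
    have hωF_le : l1Norm H ωF ≤ |C| * (basisImageL1 b₂ * l1Norm H (ω₀ ∘ₗ dP₂)) :=
      calc l1Norm H ωF ≤ C * l1Norm H (ω₀ ∘ₗ dP₂ ∘ₗ b₂) := hbound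
        _ ≤ |C| * l1Norm H (ω₀ ∘ₗ dP₂ ∘ₗ b₂) := by gcongr; exacts [l1Norm_nonneg _, le_abs_self C]
        _ ≤ |C| * (basisImageL1 b₂ * l1Norm H (ω₀ ∘ₗ dP₂)) := by
          gcongr; exact l1Norm_comp_le hN hη hb.equiv₂
    calc l1Norm H (ωF ∘ₗ a₁ - (ω₀ ∘ₗ dP₂) ∘ₗ s₁)
        ≤ l1Norm H (ωF ∘ₗ a₁) + l1Norm H ((ω₀ ∘ₗ dP₂) ∘ₗ s₁) := l1Norm_sub_le _ _
      _ ≤ basisImageL1 a₁ * l1Norm H ωF + basisImageL1 s₁ * l1Norm H (ω₀ ∘ₗ dP₂) :=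
          add_le_add (l1Norm_comp_le hN hωF ha.equiv₁) (l1Norm_comp_le hN hη hs₁)
      _ ≤ basisImageL1 a₁ * (|C| * (basisImageL1 b₂ * l1Norm H (ω₀ ∘ₗ dP₂))) +
            basisImageL1 s₁ * l1Norm H (ω₀ ∘ₗ dP₂) := by
          gcongr; exact basisImageL1_nonneg a₁
      _ = (basisImageL1 a₁ * (|C| * basisImageL1 b₂) + basisImageL1 s₁) *
            l1Norm H (ω₀ ∘ₗ dP₂) := by ring

end

/-- If a length-two based free partial resolution `F_*` of `ℤ`
over `ℤG` satisfies the uniform linear filling property for coboundaries in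
`Hom_{ℤH}(F₂,ℤ)` (uniformly over all finite-index normal subgroups `H ≤ G`), then
so does any other such partial resolution `P_*`, with a possibly different
constant. -/
theorem uniform_filling_independent_of_resolution
    {G : Type*} [Group G] {k₀ k₁ k₂ m₀ m₁ m₂ : ℕ}
    (dF₂ : FreeMod G k₂ →ₗ[ℤ] FreeMod G k₁) (dF₁ : FreeMod G k₁ →ₗ[ℤ] FreeMod G k₀)
    (εF : FreeMod G k₀ →ₗ[ℤ] ℤ)
    (dP₂ : FreeMod G m₂ →ₗ[ℤ] FreeMod G m₁) (dP₁ : FreeMod G m₁ →ₗ[ℤ] FreeMod G m₀)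
    (εP : FreeMod G m₀ →ₗ[ℤ] ℤ)
    (hF : IsPartialFreeResolution dF₂ dF₁ εF)
    (hP : IsPartialFreeResolution dP₂ dP₁ εP)
    (C : ℝ) (hC : UniformFilling dF₂ dF₁ C) :
    ∃ C' : ℝ, UniformFilling dP₂ dP₁ C' := by
  obtain ⟨a₀, a₁, a₂, ha⟩ := hP.exists_isChainMap hF
  obtain ⟨b₀, b₁, b₂, hb⟩ := hF.exists_isChainMap hP
  obtain ⟨s₀, s₁, -, hs₁, -, hs⟩ := (hb.comp ha).exists_homotopy hP hP.equiv_d₁ IsChainMap.id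
  refine ⟨_, UniformFilling.of_homotopy_retract ha hb hs₁ ?_ hC⟩
  rw [← LinearMap.comp_assoc, eq_sub_of_add_eq hs]
  simp only [LinearMap.sub_comp, LinearMap.comp_assoc, hP.d₁_comp_d₂, LinearMap.comp_zero,
    sub_zero, LinearMap.id_comp]
end
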